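/- arXiv:math/0407533 — 4 statements merged into one kernel-verified Lean document; each statement's English description precedes it below -/
import Mathlib

section
/- Let N ≥ 2 be an integer, let h_N(z) = 1/(1 - z^N), and let δ be a real number with 0 < δ < 1/(8 log N). If z is a complex number such that |z - w| ≥ δ N^{-1} for every complex w with w^N = 1, then |h_N(z)| ≤ 2δ^{-1}. -/
open Real

private lemma bern_low (N : ℕ) (b : ℝ) (hb0 : 0 ≤ b) (hb : (N:ℝ)*b ≤ 1/3) (hN : 1 ≤ N) :
    (1-b)^N ≤ 1 - (3/4)*((N:ℝ)*b) := by
  have hN1 : (1:ℝ) ≤ N := by exact_mod_cast hN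
  have hb1 : b ≤ 1/3 := by nlinarith
  have hP : (0:ℝ) ≤ (1-b)^N := pow_nonneg (by linarith) N
  have e1 : (1-b)^N * (1+b)^N ≤ 1 := by
    rw [← mul_pow]
    apply pow_le_one₀ (by nlinarith) (by nlinarith)
  have e2 : 1 + (N:ℝ)*b ≤ (1+b)^N := one_add_mul_le_pow (by linarith) N
  have e3 : (1-b)^N * (1 + (N:ℝ)*b) ≤ 1 := by nlinarith
  have hs0 : 0 ≤ (N:ℝ)*b := by positivity
  have h14 : (1:ℝ) ≤ (1 - (3/4)*((N:ℝ)*b))*(1+(N:ℝ)*b) := by nlinarith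
  have h1s : (0:ℝ) < 1+(N:ℝ)*b := by linarith
  exact le_of_mul_le_mul_right (by linarith) h1s

private lemma bern_pow (N m : ℕ) (hm : m ≤ N) (hN : 2 ≤ N) (δ r : ℝ) (hδ0 : 0 < δ)
    (hδ5 : δ ≤ 1/5) (h2 : 1 - 3*δ/(4*N) ≤ r) : 1 - 3*δ/4 ≤ r^m := by
  have hN0 : (0:ℝ) < N := by positivity
  have hN1 : (1:ℝ) ≤ N := by exact_mod_cast Nat.one_le_of_lt hN
  have hbase : (0:ℝ) ≤ 1 - 3*δ/(4*N) := by
    have : 3*δ/(4*N) ≤ 3*δ/4 := by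
      apply div_le_div_of_nonneg_left (by linarith) (by norm_num) (by linarith)
    linarith
  have hmN : (m:ℝ) ≤ N := by exact_mod_cast hm
  have hq0 : (0:ℝ) ≤ 3*δ/(4*N) := by positivity
  have b1 := one_add_mul_le_pow (a := -(3*δ/(4*N))) (by linarith) m
  rw [show (1 + -(3*δ/(4*N))) = 1 - 3*δ/(4*N) by ring] at b1
  have b2 : (1 - 3*δ/(4*N))^m ≤ r^m := pow_le_pow_left₀ hbase h2 m
  have hprod : (0:ℝ) ≤ ((N:ℝ) - m) * (3*δ/(4*N)) := mul_nonneg (by linarith) hq0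
  have heq : (N:ℝ) * (3*δ/(4*N)) = 3*δ/4 := by field_simp
  nlinarith

set_option maxHeartbeats 1600000 in
private lemma mid_ineq (N : ℕ) (hN : 2 ≤ N) (δ r c : ℝ) (hδ0 : 0 < δ) (hδ5 : δ ≤ 1/5)
    (hr0 : 0 ≤ r) (hrl : 1 - 3*δ/(4*N) ≤ r) (hcabs : |c| ≤ π)
    (hd2 : (δ/N)^2 ≤ (r-1)^2 + 2*r*(1 - Real.cos (c/N))) :
    (δ/2)^2 ≤ (r^N-1)^2 + 2*r^N*(1 - Real.cos c) := by
  have hN0 : (0:ℝ) < N := by positivity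
  have hN1 : (1:ℝ) ≤ N := by exact_mod_cast Nat.one_le_of_lt hN
  have hπ := Real.pi_pos
  rcases le_or_gt 1 |c| with hc1 | hc1
  · -- far angle : 1 - cos c ≥ 1/3
    have hcos : Real.cos c ≤ 2/3 := by
      rw [← Real.cos_abs]
      calc Real.cos |c| ≤ Real.cos 1 :=
            Real.cos_le_cos_of_nonneg_of_le_pi (by norm_num) hcabs hc1
        _ ≤ 2/3 := Real.cos_one_le.trans (by norm_num)
    have hrN := bern_pow N N le_rfl hN δ r hδ0 hδ5 hrl
    nlinarith [sq_nonneg (r^N - 1)]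
  · -- near angle
    have claimA : ((3/4)*N*(r-1))^2 ≤ (r^N - 1)^2 := by
      rcases le_total r 1 with hle | hge
      · have hNr : (N:ℝ)*(1-r) ≤ 1/3 := by
          have hstep : (N:ℝ)*(1-r) ≤ (N:ℝ)*(3*δ/(4*N)) := by
            apply mul_le_mul_of_nonneg_left (by linarith) (le_of_lt hN0)
          have heq : (N:ℝ) * (3*δ/(4*N)) = 3*δ/4 := by field_simp
          rw [heq] at hstep; linarith
        have hlow := bern_low N (1-r) (by linarith) hNr (by omega)
        rw [show (1 - (1-r)) = r by ring] at hlow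
        have hge0 : (0:ℝ) ≤ (3/4)*((N:ℝ)*(1-r)) :=
          mul_nonneg (by norm_num) (mul_nonneg hN0.le (by linarith))
        nlinarith [hlow]
      · have b1 := one_add_mul_le_pow (a := r - 1) (by linarith) N
        rw [show (1 + (r-1)) = r by ring] at b1
        nlinarith [b1, mul_nonneg (sub_nonneg.2 hN1) (sub_nonneg.2 hge)]
    have hcosc : 1 - Real.cos c = 2 * Real.sin (c/2)^2 := by
      have hh := Real.sin_sq_eq_half_sub (c/2)
      rw [show 2*(c/2) = c by ring] at hh
      linarith
    have hcoscN : 1 - Real.cos (c/N) = 2 * Real.sin (c/(2*N))^2 := by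
      have hh := Real.sin_sq_eq_half_sub (c/(2*N))
      rw [show 2*(c/(2*N)) = c/N by ring] at hh
      linarith
    have habs2 : Real.sin (c/2)^2 = Real.sin (|c|/2)^2 := by
      rcases abs_cases c with ⟨h,_⟩|⟨h,_⟩ <;> rw [h]
      rw [show -c/2 = -(c/2) by ring, Real.sin_neg]; ring
    have habs3 : Real.sin (c/(2*N))^2 = Real.sin (|c|/(2*N))^2 := by
      rcases abs_cases c with ⟨h,_⟩|⟨h,_⟩ <;> rw [h]
      rw [show -c/(2*N) = -(c/(2*N)) by ring, Real.sin_neg]; ring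
    have hss : ((15/16)*(N:ℝ))^2 * Real.sin (c/(2*N))^2 ≤ Real.sin (c/2)^2 := by
      rw [habs2, habs3]
      rcases eq_or_ne c 0 with h0 | h0
      · simp [h0]
      · have hc0 : 0 < |c| := abs_pos.mpr h0
        have hx0 : 0 < |c|/2 := by linarith
        have hx5 : |c|/2 ≤ 1/2 := by linarith
        have hS := Real.sin_gt_sub_cube hx0
        have hTle : Real.sin (|c|/(2*N)) ≤ |c|/(2*N) := Real.sin_le (by positivity)
        have hT0 : 0 ≤ Real.sin (|c|/(2*N)) := by
          apply Real.sin_nonneg_of_nonneg_of_le_pi (by positivity)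
          have : |c|/(2*N) ≤ |c|/2 := by
            apply div_le_div_of_nonneg_left hc0.le (by norm_num) (by linarith)
          nlinarith [Real.pi_gt_three]
        have key1 : (15/16)*(N:ℝ)*Real.sin (|c|/(2*N)) ≤ Real.sin (|c|/2) := by
          have hNT : (N:ℝ) * Real.sin (|c|/(2*N)) ≤ |c|/2 := by
            have hstep := mul_le_mul_of_nonneg_left hTle (le_of_lt hN0)
            have heq : (N:ℝ) * (|c|/(2*N)) = |c|/2 := by field_simp
            rw [heq] at hstep; exact hstep
          have hsq2 : (|c|/2)^2 ≤ 1/4 := by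
            have := pow_le_pow_left₀ hx0.le hx5 2
            norm_num at this
            linarith
          have hmm := mul_le_mul_of_nonneg_left hsq2 hx0.le
          have h3 : (|c|/2)^3 = (|c|/2) * (|c|/2)^2 := by ring
          linarith
        have ha0 : 0 ≤ (15/16)*(N:ℝ)*Real.sin (|c|/(2*N)) := by positivity
        have hfin := pow_le_pow_left₀ ha0 key1 2
        have heq2 : ((15/16)*(N:ℝ))^2 * Real.sin (|c|/(2*N))^2
            = ((15/16)*(N:ℝ)*Real.sin (|c|/(2*N)))^2 := by ring
        rw [heq2]
        exact hfin
    have hrpos : (0:ℝ) < r := by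
      have : 3*δ/(4*N) ≤ 3*δ/4 := by
        apply div_le_div_of_nonneg_left (by linarith) (by norm_num) (by linarith)
      nlinarith
    have hrN1 := bern_pow N (N-1) (Nat.sub_le N 1) hN δ r hδ0 hδ5 hrl
    have hpowsplit : r^N = r^(N-1) * r := by
      rw [← pow_succ]
      congr 1
      omega
    have claimB : ((3/4)*N)^2 * (2*r*(1 - Real.cos (c/N))) ≤ 2*r^N*(1 - Real.cos c) := by
      rw [hcosc, hcoscN, hpowsplit]
      have e1 : (9/16)*(N:ℝ)^2 * Real.sin (c/(2*N))^2 ≤ (1 - 3*δ/4) * Real.sin (c/2)^2 := by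
        have hmul := mul_le_mul_of_nonneg_left hss (show (0:ℝ) ≤ 1 - 3*δ/4 by linarith)
        nlinarith [sq_nonneg (Real.sin (c/(2*N))), sq_nonneg ((N:ℝ)*Real.sin (c/(2*N)))]
      have e2 : (1-3*δ/4) * Real.sin (c/2)^2 ≤ r^(N-1) * Real.sin (c/2)^2 :=
        mul_le_mul_of_nonneg_right hrN1 (sq_nonneg _)
      have e3 := mul_le_mul_of_nonneg_left (e1.trans e2) hr0
      nlinarith [e3]
    have e := mul_le_mul_of_nonneg_left hd2 (by positivity : (0:ℝ) ≤ (9/16)*(N:ℝ)^2)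
    have hδN : (9/16)*(N:ℝ)^2 * (δ/N)^2 = (9/16)*δ^2 := by field_simp
    rw [hδN] at e
    nlinarith [claimA, claimB, e, sq_nonneg δ]

private lemma key_lemma (N : ℕ) (hN : 2 ≤ N) (δ : ℝ) (hδ0 : 0 < δ) (hδ5 : δ ≤ 1/5) (z : ℂ)
    (hz : ∀ w : ℂ, w ^ N = 1 → δ / N ≤ ‖z - w‖) :
    δ/2 ≤ ‖1 - z^N‖ := by
  have hN0 : (0:ℝ) < N := by positivity
  have hN1 : (1:ℝ) ≤ N := by exact_mod_cast Nat.one_le_of_lt hN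
  set r := ‖z‖ with hr
  have hr0 : 0 ≤ r := norm_nonneg z
  have habsN : ‖z^N‖ = r^N := by rw [norm_pow]
  rcases le_or_gt (1 + δ/(2*N)) r with h1 | h1
  · -- large modulus
    have hd0 : (0:ℝ) ≤ δ/(2*N) := by positivity
    have b1 := one_add_mul_le_pow (a := δ/(2*N)) (by linarith) N
    have heq : (N:ℝ) * (δ/(2*N)) = δ/2 := by field_simp
    have hrN : 1 + δ/2 ≤ r^N := by
      calc (1:ℝ) + δ/2 = 1 + (N:ℝ)*(δ/(2*N)) := by rw [heq]
        _ ≤ (1 + δ/(2*N))^N := b1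
        _ ≤ r^N := pow_le_pow_left₀ (by positivity) h1 N
    have t : ‖z^N‖ ≤ ‖z^N - 1‖ + ‖(1:ℂ)‖ := by
      calc ‖z^N‖ = ‖(z^N - 1) + 1‖ := by ring_nf
        _ ≤ _ := norm_add_le _ _
    rw [norm_sub_rev]
    simp only [norm_one, habsN] at t
    linarith
  rcases le_or_gt r (1 - 3*δ/(4*N)) with h2 | h2
  · -- small modulus
    have heq : (N:ℝ)*(3*δ/(4*N)) = 3*δ/4 := by field_simp
    have hb : (N:ℝ)*(3*δ/(4*N)) ≤ 1/3 := by rw [heq]; linarith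
    have hlow := bern_low N (3*δ/(4*N)) (by positivity) hb (by omega)
    rw [heq] at hlow
    have hrN : r^N ≤ 1 - (3/4)*(3*δ/4) :=
      le_trans (pow_le_pow_left₀ hr0 h2 N) hlow
    have t : ‖(1:ℂ)‖ ≤ ‖1 - z^N‖ + ‖z^N‖ := by
      calc ‖(1:ℂ)‖ = ‖(1 - z^N) + z^N‖ := by ring_nf
        _ ≤ _ := norm_add_le _ _
    simp only [norm_one, habsN] at t
    linarith
  · -- middle annulus
    have hπ := Real.pi_pos
    set θ := z.arg with hθ
    have hpolar : (↑r) * Complex.exp (↑θ * Complex.I) = z := Complex.norm_mul_exp_arg_mul_I z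
    set k : ℤ := round ((N:ℝ)*θ/(2*π)) with hk
    set c : ℝ := (N:ℝ)*θ - 2*π*k with hc
    have hcabs : |c| ≤ π := by
      have ha : |(N:ℝ)*θ/(2*π) - k| ≤ 1/2 := abs_sub_round _
      have h2' : c = (2*π) * ((N:ℝ)*θ/(2*π) - k) := by rw [hc]; field_simp
      rw [h2', abs_mul, abs_of_pos (by linarith : (0:ℝ) < 2*π)]
      nlinarith
    set φ : ℝ := 2*π*k/N with hφ
    set w : ℂ := Complex.exp (↑φ * Complex.I) with hw
    have hwN : w^N = 1 := by
      rw [hw, ← Complex.exp_nat_mul]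
      rw [show (N:ℂ) * (↑φ * Complex.I) = (k:ℂ) * (2*↑π*Complex.I) by
        rw [hφ]; push_cast
        have hNne : (N:ℂ) ≠ 0 := by exact_mod_cast (by positivity : (N:ℝ) ≠ 0)
        field_simp]
      exact Complex.exp_int_mul_two_pi_mul_I k
    have hd := hz w hwN
    have h3 : θ - φ = c/N := by
      rw [hφ, hc]; field_simp
    -- squared distance to the root
    have hzw : ‖z - w‖^2 = (r-1)^2 + 2*r*(1 - Real.cos (c/N)) := by
      have hids : z - w = ↑(r*Real.cos θ - Real.cos φ) + ↑(r*Real.sin θ - Real.sin φ) * Complex.I := by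
        rw [← hpolar, hw, Complex.exp_mul_I, Complex.exp_mul_I]
        push_cast
        ring
      rw [hids, Complex.sq_norm, Complex.normSq_add_mul_I]
      have h4 : Real.cos (c/N) = Real.cos θ * Real.cos φ + Real.sin θ * Real.sin φ := by
        rw [← h3, Real.cos_sub]
      have h5 := Real.sin_sq_add_cos_sq θ
      have h6 := Real.sin_sq_add_cos_sq φ
      linear_combination r^2*h5 + h6 + 2*r*h4
    -- squared value of 1 - z^N
    have hcosN : Real.cos ((N:ℝ)*θ) = Real.cos c := by
      rw [show (N:ℝ)*θ = c + k*(2*π) by rw [hc]; ring, Real.cos_add_int_mul_two_pi]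
    have hzN : ‖1 - z^N‖^2 = (r^N-1)^2 + 2*r^N*(1 - Real.cos c) := by
      have harg : ((N:ℂ)) * (↑θ * Complex.I) = ↑((N:ℝ)*θ) * Complex.I := by push_cast; ring
      have hzNe : z^N = ↑(r^N) * Complex.exp (↑((N:ℝ)*θ) * Complex.I) := by
        rw [← hpolar, mul_pow, ← Complex.exp_nat_mul, harg]
        push_cast
        ring
      have hids : 1 - z^N = ↑(1 - r^N*Real.cos ((N:ℝ)*θ)) + ↑(-(r^N*Real.sin ((N:ℝ)*θ))) * Complex.I := by
        rw [hzNe, Complex.exp_mul_I]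
        push_cast
        ring
      rw [hids, Complex.sq_norm, Complex.normSq_add_mul_I]
      have h5 := Real.sin_sq_add_cos_sq ((N:ℝ)*θ)
      linear_combination (r^N)^2*h5 - 2*(r^N)*hcosN
    -- the squared hypothesis
    have hd2 : (δ/N)^2 ≤ (r-1)^2 + 2*r*(1 - Real.cos (c/N)) := by
      rw [← hzw]
      exact pow_le_pow_left₀ (by positivity) hd 2
    have hsq : (δ/2)^2 ≤ ‖1 - z^N‖^2 := by
      rw [hzN]
      exact mid_ineq N hN δ r c hδ0 hδ5 hr0 h2.le hcabs hd2
    nlinarith [norm_nonneg (1 - z^N)]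

/-- Let `N ≥ 2` be an integer, let `h_N(z) = 1/(1 - z^N)`, and let `δ` be a
real number with `0 < δ < 1/(8 log N)`.  If `z` is a complex number such that
`|z - w| ≥ δ N⁻¹` for every complex `w` with `w^N = 1`, then `|h_N(z)| ≤ 2 δ⁻¹`.
(The hypothesis keeps `z` away from all `N`-th roots of unity, so `z^N ≠ 1` and `h_N` is
defined at `z`.) -/
theorem statement2 (N : ℕ) (hN : 2 ≤ N) (δ : ℝ) (hδ0 : 0 < δ)
    (hδ : δ < 1 / (8 * Real.log N)) (z : ℂ)
    (hz : ∀ w : ℂ, w ^ N = 1 → δ / N ≤ ‖z - w‖) :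
    ‖(1 - z ^ N)⁻¹‖ ≤ 2 / δ := by
  have hδ5 : δ ≤ 1/5 := by
    have hl2 : (0.6931471803:ℝ) < Real.log 2 := Real.log_two_gt_d9
    have hlN : Real.log 2 ≤ Real.log N := by
      apply Real.log_le_log (by norm_num)
      exact_mod_cast hN
    have : 1 / (8*Real.log N) ≤ 1/5 := by
      rw [div_le_div_iff₀ (by linarith) (by norm_num)]
      linarith
    linarith
  have hkey := key_lemma N hN δ hδ0 hδ5 z hz
  have hpos : 0 < ‖1 - z^N‖ := lt_of_lt_of_le (by positivity) hkey
  rw [norm_inv]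
  calc (‖1 - z^N‖)⁻¹ ≤ (δ/2)⁻¹ := by
        apply inv_anti₀ (by positivity) hkey
    _ = 2/δ := by rw [inv_div]
end

section
/- There exists n₀ ∈ ℕ such that for every integer n ≥ n₀, setting N = n·2^{2n} and h_N(z) = 1/(1 - z^N), the following hold: (i) |h_N(z)| ≤ (n+1)^{-4} whenever |z| ≥ 1 + 2^{-(2n+1)}; (ii) |1 - h_N(z)| ≤ (n+1)^{-4} whenever |z| ≤ 1 - 2^{-(2n+1)}; (iii) h_N(z) ≠ 0 for all z with z^N ≠ 1; (iv) |h_N(z)| ≤ n^4·2^{2n+1} whenever |z - w| ≥ n^{-5}·2^{-4n} for every complex w with w^N = 1. -/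
set_option maxHeartbeats 4000000


open Complex in
lemma aux_abs_sq (r t : ℝ) :
    (‖(r:ℂ) * Complex.exp (t*I) - 1‖)^2 = (r-1)^2 + 2*r*(1-Real.cos t) := by
  rw [Complex.sq_norm, Complex.normSq_apply]
  simp [Complex.exp_ofReal_mul_I_re, Complex.exp_ofReal_mul_I_im]
  linear_combination (r^2) * Real.sin_sq_add_cos_sq t

lemma aux_halfangle (x : ℝ) (hx : |x| ≤ 1) : x^2 ≤ 2.3*(1 - Real.cos x) := by
  have hc : Real.cos x = 1 - 2 * Real.sin (x/2)^2 := by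
    have h1 := Real.cos_two_mul (x/2)
    have h2 := Real.cos_sq' (x/2)
    have : 2 * (x/2) = x := by ring
    rw [this] at h1; rw [h2] at h1; linarith
  rcases eq_or_ne x 0 with h | h
  · simp [h]
  · have hpos : 0 < |x| := abs_pos.mpr h
    have hs : |x|/2 - (|x|/2)^3/4 < Real.sin (|x|/2) :=
      by nlinarith [Real.sin_gt_sub_cube (x := |x|/2) (by linarith), pow_pos (by linarith : (0:ℝ) < |x|/2) 3]
    have h15 : (15/32) * |x| ≤ Real.sin (|x|/2) := by
      nlinarith [hs, mul_nonneg (mul_nonneg (abs_nonneg x) (abs_nonneg x)) (sub_nonneg.mpr hx)]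
    have hsq : Real.sin (x/2)^2 = Real.sin (|x|/2)^2 := by
      rcases abs_cases x with ⟨h1, _⟩ | ⟨h1, _⟩
      · rw [h1]
      · rw [h1]; rw [show -x/2 = -(x/2) by ring, Real.sin_neg]; ring
    have : (15/32 * |x|)^2 ≤ Real.sin (|x|/2)^2 := by
      nlinarith [abs_nonneg x]
    rw [hc]
    rw [hsq] at *
    nlinarith [sq_abs x]

lemma aux_growth : ∀ n : ℕ, 64 ≤ n → 2*((n:ℝ)+1)^4 + 2 ≤ (3/2)^n := by
  intro n hn
  induction n, hn using Nat.le_induction with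
  | base => norm_num
  | succ n hn ih =>
    have hn' : (64:ℝ) ≤ n := by exact_mod_cast hn
    have h1 : ((n:ℝ)+1+1) ≤ (65/64)*((n:ℝ)+1) := by linarith
    have h2 : ((n:ℝ)+1+1)^4 ≤ ((65/64)*((n:ℝ)+1))^4 :=
      pow_le_pow_left₀ (by linarith) h1 4
    have h3 : ((3:ℝ)/2)^(n+1) = (3/2) * (3/2)^n := by ring
    push_cast
    rw [h3]
    nlinarith [pow_nonneg (by norm_num : (0:ℝ) ≤ 3/2) n]

lemma aux_fact (r a b : ℝ) :
    (r:ℂ) * Complex.exp (((a+b : ℝ):ℂ) * Complex.I) - Complex.exp (((a:ℝ):ℂ) * Complex.I)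
      = Complex.exp (((a:ℝ):ℂ) * Complex.I) * ((r:ℂ) * Complex.exp (((b:ℝ):ℂ) * Complex.I) - 1) := by
  rw [mul_sub, mul_one]
  congr 1
  rw [show Complex.exp (((a:ℝ):ℂ) * Complex.I) * ((r:ℂ) * Complex.exp (((b:ℝ):ℂ) * Complex.I))
      = (r:ℂ) * (Complex.exp (((a:ℝ):ℂ) * Complex.I) * Complex.exp (((b:ℝ):ℂ) * Complex.I)) by ring,
    ← Complex.exp_add]
  congr 2
  push_cast
  ring


lemma statement3_aux123 : ∀ n : ℕ, 64 ≤ n →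
      (∀ z : ℂ, 1 + ((2 : ℝ) ^ (2 * n + 1))⁻¹ ≤ ‖z‖ →
        ‖(1 - z ^ (n * 2 ^ (2 * n)))⁻¹‖ ≤ (((n : ℝ) + 1) ^ 4)⁻¹) ∧
      (∀ z : ℂ, ‖z‖ ≤ 1 - ((2 : ℝ) ^ (2 * n + 1))⁻¹ →
        ‖1 - (1 - z ^ (n * 2 ^ (2 * n)))⁻¹‖ ≤ (((n : ℝ) + 1) ^ 4)⁻¹) ∧
      (∀ z : ℂ, z ^ (n * 2 ^ (2 * n)) ≠ 1 → (1 - z ^ (n * 2 ^ (2 * n)))⁻¹ ≠ 0) := by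
  intro n hn
  set N := n * 2 ^ (2 * n) with hNdef
  set ε : ℝ := ((2 : ℝ) ^ (2 * n + 1))⁻¹ with hεdef
  have hεpos : 0 < ε := by positivity
  have hεhalf : (2:ℝ)^(2*n) * ε = 1/2 := by
    rw [hεdef, pow_succ]
    field_simp
  have hε1 : ε ≤ 1/2 := by
    nlinarith [one_le_pow₀ (by norm_num : (1:ℝ) ≤ 2) (n := 2*n), hεpos]
  have hg := aux_growth n hn
  have hA : (0:ℝ) < ((n:ℝ)+1)^4 := by positivity
  have hber : (3:ℝ)/2 ≤ (1+ε)^(2^(2*n)) := by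
    have h := one_add_mul_le_pow (show (-2:ℝ) ≤ ε by linarith) (2^(2*n))
    have hc : ((2^(2*n) : ℕ) : ℝ) = (2:ℝ)^(2*n) := by push_cast; ring
    rw [hc] at h
    linarith [hεhalf ▸ h]
  refine ⟨?_, ?_, ?_⟩
  · -- part (i)
    intro z hz
    have h0 : (0:ℝ) ≤ 1 + ε := by linarith
    have h1 : (3:ℝ)/2 ≤ ‖z‖ ^ (2^(2*n)) :=
      le_trans hber (pow_le_pow_left₀ h0 hz _)
    have h2 : ((3:ℝ)/2)^n ≤ ‖z‖ ^ N := by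
      rw [hNdef, pow_mul']
      exact pow_le_pow_left₀ (by norm_num) h1 n
    have h4 : ‖z‖ ^ N - 1 ≤ ‖1 - z^N‖ := by
      have h := norm_sub_norm_le (z^N) (1:ℂ)
      rw [norm_sub_rev] at h
      simpa using h
    have h3 : ((n:ℝ)+1)^4 ≤ ‖1 - z^N‖ := by linarith
    rw [norm_inv]
    exact inv_anti₀ hA h3
  · -- part (ii)
    intro z hz
    have hzn : (0:ℝ) ≤ ‖z‖ := norm_nonneg z
    have hb1 : ‖z‖ ^ (2^(2*n)) ≤ (1-ε)^(2^(2*n)) :=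
      pow_le_pow_left₀ hzn hz _
    have hb2 : (1-ε)^(2^(2*n)) ≤ 2/3 := by
      have hmul : (1-ε)^(2^(2*n)) * (1+ε)^(2^(2*n)) = (1-ε^2)^(2^(2*n)) := by
        rw [← mul_pow]; ring_nf
      have hle1 : (1-ε^2)^(2^(2*n)) ≤ 1 := by
        apply pow_le_one₀ <;> nlinarith
      have hnn : (0:ℝ) ≤ (1-ε)^(2^(2*n)) := pow_nonneg (by linarith) _
      nlinarith [hber, hnn]
    have hq : ‖z^N‖ ≤ (2/3:ℝ)^n := by
      rw [norm_pow, hNdef, pow_mul']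
      calc (‖z‖ ^ 2^(2*n))^n ≤ ((1-ε)^(2^(2*n)))^n :=
            pow_le_pow_left₀ (pow_nonneg hzn _) hb1 n
        _ ≤ (2/3:ℝ)^n := pow_le_pow_left₀ (pow_nonneg (by linarith) _) hb2 n
    have hq2 : (2/3:ℝ)^n * (2*((n:ℝ)+1)^4+2) ≤ 1 := by
      have hmul : (2/3:ℝ)^n * (3/2)^n = 1 := by
        rw [← mul_pow]; norm_num
      nlinarith [pow_nonneg (by norm_num : (0:ℝ) ≤ 2/3) n, hg]
    have hqhalf : ‖z^N‖ ≤ 1/2 := by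
      nlinarith [hq, hq2, hA, pow_nonneg (by norm_num : (0:ℝ) ≤ 2/3) n]
    have hlb : 1/2 ≤ ‖1 - z^N‖ := by
      have h := norm_sub_norm_le (1:ℂ) (z^N)
      simp only [norm_one] at h
      linarith
    have hne : (1:ℂ) - z^N ≠ 0 := by
      intro h
      rw [h] at hlb
      simp at hlb
      linarith
    have hrw : 1 - (1 - z^N)⁻¹ = -(z^N) * (1 - z^N)⁻¹ := by
      field_simp
      ring
    rw [hrw, norm_mul, norm_neg, norm_inv]
    have hinv : (‖1 - z^N‖)⁻¹ ≤ 2 := by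
      rw [inv_le_iff_one_le_mul₀ (by linarith)] <;> linarith
    calc ‖z^N‖ * (‖1 - z^N‖)⁻¹
        ≤ (2/3:ℝ)^n * 2 := by
          apply mul_le_mul hq hinv (by positivity) (by positivity)
      _ ≤ (((n:ℝ)+1)^4)⁻¹ := by
          rw [inv_eq_one_div, le_div_iff₀ hA]
          nlinarith [hq2, pow_nonneg (by norm_num : (0:ℝ) ≤ 2/3) n]
  · -- part (iii)
    intro z hz
    exact inv_ne_zero (sub_ne_zero_of_ne (Ne.symm hz))

lemma statement3_aux4 : ∀ n : ℕ, 64 ≤ n →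
      (∀ z : ℂ,
        (∀ w : ℂ, w ^ (n * 2 ^ (2 * n)) = 1 →
          ((n : ℝ) ^ 5)⁻¹ * ((2 : ℝ) ^ (4 * n))⁻¹ ≤ ‖z - w‖) →
        ‖(1 - z ^ (n * 2 ^ (2 * n)))⁻¹‖ ≤ (n : ℝ) ^ 4 * 2 ^ (2 * n + 1)) := by
  intro n hn z hz
  by_contra hcon
  push_neg at hcon
  set N := n * 2 ^ (2 * n) with hNdef
  clear_value N
  have hNpos : 0 < N := by rw [hNdef]; positivity
  have hNR : (0:ℝ) < (N:ℝ) := by exact_mod_cast hNpos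
  have hN1 : (1:ℝ) ≤ (N:ℝ) := by exact_mod_cast hNpos
  have hNne : ((N:ℕ):ℝ) ≠ 0 := ne_of_gt hNR
  set B : ℝ := (n:ℝ)^4 * 2^(2*n+1) with hBdef
  clear_value B
  have hn64 : (64:ℝ) ≤ (n:ℝ) := by exact_mod_cast hn
  have hB100 : (100:ℝ) ≤ B := by
    have h1 : (64:ℝ)^4 ≤ (n:ℝ)^4 := pow_le_pow_left₀ (by norm_num) hn64 4
    have h2 : (1:ℝ) ≤ (2:ℝ)^(2*n+1) := one_le_pow₀ (by norm_num)
    rw [hBdef]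
    nlinarith
  have hBpos : (0:ℝ) < B := by linarith
  have hη : B⁻¹ ≤ 1/100 := by
    rw [inv_eq_one_div]
    exact one_div_le_one_div_of_le (by norm_num) hB100
  have hηpos : 0 < B⁻¹ := inv_pos.mpr hBpos
  have hne : (1:ℂ) - z^N ≠ 0 := by
    intro h
    rw [h] at hcon
    simp at hcon
    linarith
  have habspos : 0 < ‖1 - z^N‖ := norm_pos_iff.mpr hne
  have hA : ‖1 - z^N‖ < B⁻¹ := by
    rw [norm_inv] at hcon
    have h2 : ‖1 - z^N‖ * B < ‖1 - z^N‖ * (‖1 - z^N‖)⁻¹ :=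
      mul_lt_mul_of_pos_left hcon habspos
    rw [mul_inv_cancel₀ (ne_of_gt habspos)] at h2
    rw [inv_eq_one_div, lt_div_iff₀ hBpos]
    linarith
  set w := z ^ N with hwdef
  clear_value w
  set A := ‖1 - w‖ with hAdef
  clear_value A
  have hA0 : (0:ℝ) ≤ A := by rw [hAdef]; exact norm_nonneg _
  have hA100 : A ≤ 1/100 := le_trans hA.le hη
  have hwne : w ≠ 0 := by
    intro h
    rw [h, sub_zero, norm_one] at hAdef
    rw [hAdef] at hA100
    norm_num at hA100
  have hzne : z ≠ 0 := by
    intro h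
    rw [h, zero_pow hNpos.ne'] at hwdef
    exact hwne hwdef
  set r := ‖z‖ with hrdef
  clear_value r
  have hrpos : 0 < r := by rw [hrdef]; exact norm_pos_iff.mpr hzne
  set ρ := ‖w‖ with hρdef
  clear_value ρ
  have hρpos : 0 < ρ := by rw [hρdef]; exact norm_pos_iff.mpr hwne
  have hρ : ρ = r ^ N := by rw [hρdef, hwdef, hrdef, norm_pow]
  set φ := Complex.arg w with hφdef
  clear_value φ
  set θ := Complex.arg z with hθdef
  clear_value θ
  -- decomposition of A²
  have hwdec : (ρ:ℂ) * Complex.exp ((φ:ℂ) * Complex.I) = w := by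
    rw [hρdef, hφdef]; exact Complex.norm_mul_exp_arg_mul_I w
  have hA2 : A^2 = (ρ-1)^2 + 2*ρ*(1-Real.cos φ) := by
    have h := aux_abs_sq ρ φ
    rw [hwdec] at h
    rw [hAdef, norm_sub_rev, h]
  have hsq : (ρ-1)^2 ≤ A^2 := by nlinarith [Real.cos_le_one φ, hρpos.le]
  have hu : |ρ - 1| ≤ A := by
    rw [abs_le]
    constructor <;> nlinarith [hsq, hA0]
  have hρ99 : (99:ℝ)/100 ≤ ρ := by
    have := (abs_le.mp hu).1
    linarith
  have hρub : ρ ≤ 1 + A := by linarith [(abs_le.mp hu).2]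
  have hcosφA : 1 - Real.cos φ ≤ A^2 := by
    have h1 : 2*ρ*(1-Real.cos φ) ≤ A^2 := by linarith [sq_nonneg (ρ-1)]
    have h2 : 1 - Real.cos φ ≤ 2*ρ*(1-Real.cos φ) := by
      nlinarith [hρ99, Real.cos_le_one φ]
    linarith
  -- |φ| ≤ 1
  have hφ1 : |φ| ≤ 1 := by
    by_contra h
    push_neg at h
    have hφpi : |φ| ≤ Real.pi := by
      rw [abs_le, hφdef]
      exact ⟨(Complex.neg_pi_lt_arg w).le, Complex.arg_le_pi w⟩
    have hc : Real.cos |φ| ≤ Real.cos 1 :=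
      Real.cos_le_cos_of_nonneg_of_le_pi (by norm_num) hφpi h.le
    rw [Real.cos_abs] at hc
    have := Real.cos_one_le
    nlinarith [hcosφA, hA100, hA0]
  have hφsq : φ^2 ≤ 2.3 * (1 - Real.cos φ) := aux_halfangle φ hφ1
  have hφA : φ^2 ≤ 2.3 * A^2 := by nlinarith
  -- radial bound : N * |r-1| ≤ (100/99) A
  have bern : ∀ x : ℝ, 1 ≤ x → 1 + (N:ℝ)*(x-1) ≤ x^N := by
    intro x hx
    have h := one_add_mul_le_pow (show (-2:ℝ) ≤ x - 1 by linarith) N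
    rwa [show 1 + (x-1) = x by ring] at h
  have hr1N : (N:ℝ) * |r - 1| ≤ (100/99) * A := by
    rcases le_total 1 r with hge | hle
    · have h1 := bern r hge
      rw [← hρ] at h1
      rw [abs_of_nonneg (by linarith)]
      nlinarith [hρub]
    · have hrinv : 1 ≤ r⁻¹ := by
        nlinarith [mul_inv_cancel₀ hrpos.ne', inv_pos.mpr hrpos]
      have h1 := bern r⁻¹ hrinv
      rw [inv_pow, ← hρ] at h1
      have hρlbA : 1 - A ≤ ρ := by linarith [(abs_le.mp hu).1]
      have hρinv : ρ⁻¹ ≤ 1 + (100/99)*A := by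
        nlinarith [mul_inv_cancel₀ (ne_of_gt hρpos), inv_nonneg.mpr hρpos.le,
          hA0, hA100, hρ99, hρlbA, mul_nonneg hA0 (inv_nonneg.mpr hρpos.le)]
      have hamgm : 1 - r ≤ r⁻¹ - 1 := by
        nlinarith [sq_nonneg (r-1), mul_inv_cancel₀ hrpos.ne', hrpos]
      have h2 : (N:ℝ)*(1-r) ≤ (N:ℝ)*(r⁻¹-1) :=
        mul_le_mul_of_nonneg_left hamgm (by linarith)
      rw [abs_of_nonpos (by linarith)]
      nlinarith [h1, hρinv, h2]
  have hr_ub : r ≤ 51/50 := by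
    have h1 : |r-1| ≤ (N:ℝ)*|r-1| := by nlinarith [abs_nonneg (r-1), hN1]
    have h2 : r - 1 ≤ |r-1| := le_abs_self _
    linarith [hr1N, hA100, h1, h2]
  -- angle relation
  have hzdec : (r:ℂ) * Complex.exp ((θ:ℂ) * Complex.I) = z := by
    rw [hrdef, hθdef]; exact Complex.norm_mul_exp_arg_mul_I z
  have ecast : ((((N:ℝ)*θ : ℝ)) : ℂ) * Complex.I = (N:ℂ) * ((θ:ℂ) * Complex.I) := by
    push_cast
    ring
  have hwz : ((ρ:ℝ):ℂ) * Complex.exp (((((N:ℝ)*θ : ℝ)) : ℂ) * Complex.I) = w := by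
    rw [ecast, hwdef, ← hzdec, mul_pow, ← Complex.exp_nat_mul, hρ]
    push_cast
    ring
  have hexp_eq : Complex.exp (((((N:ℝ)*θ : ℝ)) : ℂ) * Complex.I)
      = Complex.exp (((φ:ℝ):ℂ) * Complex.I) := by
    have hρC : ((ρ:ℝ):ℂ) ≠ 0 := by
      simp only [ne_eq, Complex.ofReal_eq_zero]
      exact ne_of_gt hρpos
    apply mul_left_cancel₀ hρC
    rw [hwz, hwdec]
  obtain ⟨m, hm⟩ := Complex.exp_eq_exp_iff_exists_int.mp hexp_eq
  have hm' : (N:ℝ)*θ = φ + m*(2*Real.pi) := by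
    have him := congrArg Complex.im hm
    push_cast at him
    simpa using him
  set ω : ℂ := Complex.exp (((θ - φ/(N:ℝ) : ℝ) : ℂ) * Complex.I) with hωdef
  clear_value ω
  have hωroot : ω ^ N = 1 := by
    rw [hωdef, ← Complex.exp_nat_mul]
    have e2 : (N:ℝ) * (θ - φ/(N:ℝ)) = m * (2*Real.pi) := by
      field_simp
      linarith [hm']
    have harg : ((N:ℕ):ℂ) * ((((θ - φ/(N:ℝ) : ℝ)) : ℂ) * Complex.I)
        = (m:ℂ) * (2*(Real.pi:ℂ)*Complex.I) := by
      calc ((N:ℕ):ℂ) * ((((θ - φ/(N:ℝ) : ℝ)) : ℂ) * Complex.I)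
          = ((((N:ℝ) * (θ - φ/(N:ℝ)) : ℝ)) : ℂ) * Complex.I := by push_cast; ring
        _ = (((m * (2*Real.pi) : ℝ)) : ℂ) * Complex.I := by rw [e2]
        _ = (m:ℂ) * (2*(Real.pi:ℂ)*Complex.I) := by push_cast; ring
    rw [harg]
    exact Complex.exp_int_mul_two_pi_mul_I m
  have hzω : (r:ℂ) * Complex.exp ((θ:ℂ) * Complex.I) - ω
      = Complex.exp (((θ - φ/(N:ℝ) : ℝ) : ℂ) * Complex.I)
        * ((r:ℂ) * Complex.exp (((φ/(N:ℝ) : ℝ) : ℂ) * Complex.I) - 1) := by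
    have h := aux_fact r (θ - φ/(N:ℝ)) (φ/(N:ℝ))
    rw [show θ - φ/(N:ℝ) + φ/(N:ℝ) = θ by ring] at h
    rw [hωdef]
    exact h
  have habsω : ‖z - ω‖ ^ 2 = (r-1)^2 + 2*r*(1 - Real.cos (φ/(N:ℝ))) := by
    rw [← hzdec, hzω, norm_mul, Complex.norm_exp_ofReal_mul_I, one_mul, aux_abs_sq]
  -- final numeric assembly
  have hcosN : 1 - Real.cos (φ/(N:ℝ)) ≤ (φ/(N:ℝ))^2/2 := by
    linarith [Real.one_sub_sq_div_two_le_cos (x := φ/(N:ℝ))]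
  have hdiv : (φ/(N:ℝ))^2 * (N:ℝ)^2 = φ^2 := by field_simp
  have d1 : (r-1)^2 * (N:ℝ)^2 ≤ ((100/99)*A)^2 := by
    have h := pow_le_pow_left₀ (by positivity) hr1N 2
    rw [mul_pow, sq_abs] at h
    linarith [h]
  have d2 : 2*r*(1 - Real.cos (φ/(N:ℝ))) * (N:ℝ)^2 ≤ r * φ^2 := by
    have h := mul_le_mul_of_nonneg_left hcosN (by positivity : (0:ℝ) ≤ 2*r*(N:ℝ)^2)
    have he : 2*r*(N:ℝ)^2*((φ/(N:ℝ))^2/2) = r*φ^2 := by rw [← hdiv]; ring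
    linarith [h, he]
  have d3 : r * φ^2 ≤ (51/50) * (2.3 * A^2) := by
    calc r * φ^2 ≤ (51/50) * φ^2 := mul_le_mul_of_nonneg_right hr_ub (sq_nonneg φ)
      _ ≤ (51/50) * (2.3 * A^2) := by linarith only [hφA]
  have hA2' : A^2 < (B⁻¹)^2 := by
    have h := mul_self_lt_mul_self hA0 hA
    nlinarith only [h]
  have key : (‖z - ω‖ * (N:ℝ))^2 < (2*B⁻¹)^2 := by
    have e : (‖z - ω‖ * (N:ℝ))^2 = (‖z-ω‖)^2 * (N:ℝ)^2 := by ring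
    rw [e, habsω]
    nlinarith only [d1, d2, d3, hA2']
  have hlt : ‖z - ω‖ * (N:ℝ) < 2*B⁻¹ :=
    lt_of_pow_lt_pow_left₀ 2 (by positivity) key
  have hfin : ‖z - ω‖ < 2*B⁻¹/(N:ℝ) := (lt_div_iff₀ hNR).mpr hlt
  have hδ : ((n:ℝ)^5)⁻¹*((2:ℝ)^(4*n))⁻¹ = 2*B⁻¹/(N:ℝ) := by
    have e1 : (2:ℝ)^(4*n) = 2^(2*n)*2^(2*n) := by
      rw [← pow_add]; congr 1; ring
    have e2 : (2:ℝ)^(2*n+1) = 2^(2*n)*2 := pow_succ 2 (2*n)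
    have e3 : ((N:ℕ):ℝ) = (n:ℝ) * 2^(2*n) := by
      rw [hNdef]; push_cast; ring
    have hnne : (n:ℝ) ≠ 0 := by positivity
    have h2ne : (2:ℝ)^(2*n) ≠ 0 := by positivity
    rw [hBdef, e1, e2, e3]
    field_simp
  have hcontra := hz ω hωroot
  rw [hδ] at hcontra
  linarith

/-- There exists `n₀ ∈ ℕ` such that for every integer `n ≥ n₀`, setting
`N = n·2^{2n}` and `h_N(z) = 1/(1 - z^N)`, the following hold:
(i) `|h_N(z)| ≤ (n+1)^{-4}` whenever `|z| ≥ 1 + 2^{-(2n+1)}`;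
(ii) `|1 - h_N(z)| ≤ (n+1)^{-4}` whenever `|z| ≤ 1 - 2^{-(2n+1)}`;
(iii) `h_N(z) ≠ 0` for all `z` with `z^N ≠ 1`;
(iv) `|h_N(z)| ≤ n^4·2^{2n+1}` whenever `|z - w| ≥ n^{-5}·2^{-4n}` for every complex `w`
with `w^N = 1`. -/

theorem statement3 :
    ∃ n₀ : ℕ, ∀ n : ℕ, n₀ ≤ n →
      (∀ z : ℂ, 1 + ((2 : ℝ) ^ (2 * n + 1))⁻¹ ≤ ‖z‖ →
        ‖(1 - z ^ (n * 2 ^ (2 * n)))⁻¹‖ ≤ (((n : ℝ) + 1) ^ 4)⁻¹) ∧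
      (∀ z : ℂ, ‖z‖ ≤ 1 - ((2 : ℝ) ^ (2 * n + 1))⁻¹ →
        ‖1 - (1 - z ^ (n * 2 ^ (2 * n)))⁻¹‖ ≤ (((n : ℝ) + 1) ^ 4)⁻¹) ∧
      (∀ z : ℂ, z ^ (n * 2 ^ (2 * n)) ≠ 1 → (1 - z ^ (n * 2 ^ (2 * n)))⁻¹ ≠ 0) ∧
      (∀ z : ℂ,
        (∀ w : ℂ, w ^ (n * 2 ^ (2 * n)) = 1 →
          ((n : ℝ) ^ 5)⁻¹ * ((2 : ℝ) ^ (4 * n))⁻¹ ≤ ‖z - w‖) →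
        ‖(1 - z ^ (n * 2 ^ (2 * n)))⁻¹‖ ≤ (n : ℝ) ^ 4 * 2 ^ (2 * n + 1)) := by
  refine ⟨64, fun n hn => ?_⟩
  obtain ⟨h1, h2, h3⟩ := statement3_aux123 n hn
  exact ⟨h1, h2, h3, statement3_aux4 n hn⟩
end

section
/- Let X and Y be compact plane sets with X ⊆ Y. If R(Y) has no non-zero bounded point derivations, then R(X) has no non-zero bounded point derivations. -/
/-- `R₀(X)`: the restrictions to `X` of rational functions with poles off `X`. -/
def R0set (X : Set ℂ) : Set C(X, ℂ) :=
  {f | ∃ p q : Polynomial ℂ, (∀ z : X, q.eval (z : ℂ) ≠ 0) ∧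
    ∀ z : X, f z = p.eval (z : ℂ) / q.eval (z : ℂ)}

/-- `R(X)`: the uniform closure of `R₀(X)` in `C(X, ℂ)` (for compact `X` the compact-open
topology on `C(X, ℂ)` is the topology of uniform convergence). -/
def RX (X : Set ℂ) : Set C(X, ℂ) := closure (R0set X)

/-- `R(X)` has no non-zero bounded point derivations: for every `x ∈ X`, every continuous
linear functional which satisfies the point-derivation identity at `x` on `R(X)` vanishes
on `R(X)`.  (By the Hahn–Banach theorem, bounded functionals on `R(X)` are exactly the
restrictions of bounded functionals on `C(X, ℂ)`.) -/
def NoBPD (X : Set ℂ) : Prop :=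
  ∀ (x : X) (d : C(X, ℂ) →L[ℂ] ℂ),
    (∀ f ∈ RX X, ∀ g ∈ RX X, d (f * g) = f x * d g + g x * d f) →
    ∀ f ∈ RX X, d f = 0

/-- Let `X` and `Y` be compact plane sets with `X ⊆ Y`. If `R(Y)` has no
non-zero bounded point derivations, then neither has `R(X)`. -/
theorem statement12 (X Y : Set ℂ) (hX : IsCompact X) (hY : IsCompact Y) (hXY : X ⊆ Y)
    (h : NoBPD Y) : NoBPD X := by
  intro x d hd
  -- the inclusion `X → Y` as a continuous map
  set ι : C(X, Y) := ⟨Set.inclusion hXY, continuous_inclusion hXY⟩ with hι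
  -- restriction maps R₀(Y) into R₀(X)
  have hR0 : ∀ F ∈ R0set Y, F.comp ι ∈ R0set X := by
    rintro F ⟨p, q, hq, hF⟩
    exact ⟨p, q, fun z => hq ⟨z, hXY z.2⟩, fun z => hF ⟨z, hXY z.2⟩⟩
  -- restriction maps R(Y) into R(X)
  have hRXmap : ∀ F ∈ RX Y, F.comp ι ∈ RX X := by
    intro F hF
    have h1 : F.comp ι ∈ (fun G : C(Y, ℂ) => G.comp ι) '' closure (R0set Y) :=
      ⟨F, hF, rfl⟩
    have h2 : (fun G : C(Y, ℂ) => G.comp ι) '' closure (R0set Y) ⊆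
        closure ((fun G : C(Y, ℂ) => G.comp ι) '' R0set Y) :=
      image_closure_subset_closure_image (ContinuousMap.continuous_precomp ι)
    refine closure_mono ?_ (h2 h1)
    rintro _ ⟨G, hG, rfl⟩
    exact hR0 G hG
  -- the pulled-back functional on `C(Y, ℂ)`
  let D : C(Y, ℂ) →L[ℂ] ℂ :=
    { toFun := fun F => d (F.comp ι)
      map_add' := by intro F G; rw [← map_add]; rfl
      map_smul' := by intro c F; rw [← map_smul]; rfl
      cont := d.continuous.comp (ContinuousMap.continuous_precomp ι) }
  have hDder : ∀ F ∈ RX Y, ∀ G ∈ RX Y,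
      D (F * G) = F (⟨x, hXY x.2⟩ : Y) * D G + G (⟨x, hXY x.2⟩ : Y) * D F := by
    intro F hF G hG
    have : (F * G).comp ι = F.comp ι * G.comp ι := rfl
    show d ((F * G).comp ι) = _
    rw [this, hd (F.comp ι) (hRXmap F hF) (G.comp ι) (hRXmap G hG)]
    rfl
  have hD0 : ∀ F ∈ RX Y, d (F.comp ι) = 0 := h ⟨x, hXY x.2⟩ D hDder
  -- `d` vanishes on restricted polynomials
  have hpoly : ∀ p : Polynomial ℂ, d (p.toContinuousMapOn X) = 0 := by
    intro p
    have hcomp : (p.toContinuousMapOn Y).comp ι = p.toContinuousMapOn X := by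
      ext z; rfl
    have hmem : p.toContinuousMapOn Y ∈ RX Y :=
      subset_closure ⟨p, 1, by simp, by simp [Polynomial.toContinuousMapOn,
        Polynomial.toContinuousMap]⟩
    rw [← hcomp]
    exact hD0 _ hmem
  -- `d` vanishes on R₀(X)
  have hR0X : ∀ f ∈ R0set X, d f = 0 := by
    rintro f ⟨p, q, hq, hf⟩
    have hmul : f * q.toContinuousMapOn X = p.toContinuousMapOn X := by
      ext z
      show f z * q.eval (z : ℂ) = p.eval (z : ℂ)
      rw [hf z, div_mul_cancel₀ _ (hq z)]
    have hfRX : f ∈ RX X := subset_closure ⟨p, q, hq, hf⟩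
    have hqRX : q.toContinuousMapOn X ∈ RX X :=
      subset_closure ⟨q, 1, by simp, by simp [Polynomial.toContinuousMapOn,
        Polynomial.toContinuousMap]⟩
    have key := hd f hfRX (q.toContinuousMapOn X) hqRX
    rw [hmul, hpoly p, hpoly q, mul_zero, zero_add] at key
    have hqx : (q.toContinuousMapOn X) x ≠ 0 := hq x
    exact (mul_eq_zero.mp key.symm).resolve_left hqx
  -- conclude by continuity
  intro f hf
  have hclosed : IsClosed (d ⁻¹' {0} : Set C(X, ℂ)) :=
    isClosed_singleton.preimage d.continuous
  have : RX X ⊆ d ⁻¹' {0} := closure_minimal (fun g hg => hR0X g hg) hclosed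
  exact this hf
end

section
/- Let X be a compact plane set and let μ be a complex (regular Borel) measure on X such that the bilinear functional on R₀(X) × R₀(X) given by (f, g) ↦ ∫_X f′ g dμ is bounded, i.e., there exists M > 0 with |∫_X f′(z) g(z) dμ(z)| ≤ M |f|_X |g|_X for all f, g ∈ R₀(X). Then there exists a continuous linear map D from R(X) into its dual space R(X)′ such that D(f)(g) = ∫_X f′(z) g(z) dμ(z) for all f, g ∈ R₀(X), and D is a derivation into the dual module: D(fg)(h) = D(f)(gh) + D(g)(fh) for all f, g, h ∈ R(X). -/
open MeasureTheory

set_option synthInstance.maxHeartbeats 1000000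
set_option maxHeartbeats 2000000

/-- `R(X)` as a closed subalgebra of `C(X, ℂ)`: the topological closure of the subalgebra
generated by `R₀(X)` (for compact `X` the compact-open topology on `C(X, ℂ)` is the
topology of uniform convergence, and `R₀(X)` is itself closed under the algebra operations,
so this is exactly the uniform closure of `R₀(X)`). -/
noncomputable def RXalg (X : Set ℂ) [CompactSpace X] : Subalgebra ℂ C(X, ℂ) :=
  (Algebra.adjoin ℂ (R0set X)).topologicalClosure

/-- The supremum norm of `f ∈ C(X, ℂ)`. -/
noncomputable def supCM {X : Set ℂ} (f : C(X, ℂ)) : ℝ := ⨆ z : X, ‖f z‖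

namespace St16

/-! ### The algebra `A0` of rational restrictions -/

/-- `R0set` as a subalgebra. -/
noncomputable def A0 (X : Set ℂ) : Subalgebra ℂ C(X, ℂ) where
  carrier := R0set X
  mul_mem' := by
    rintro f g ⟨p₁, q₁, hq₁, hf⟩ ⟨p₂, q₂, hq₂, hg⟩
    exact ⟨p₁ * p₂, q₁ * q₂, fun z => by simp [mul_ne_zero (hq₁ z) (hq₂ z)],
      fun z => by simp [hf z, hg z, div_mul_div_comm]⟩
  add_mem' := by
    rintro f g ⟨p₁, q₁, hq₁, hf⟩ ⟨p₂, q₂, hq₂, hg⟩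
    refine ⟨p₁ * q₂ + p₂ * q₁, q₁ * q₂, fun z => by simp [mul_ne_zero (hq₁ z) (hq₂ z)],
      fun z => ?_⟩
    simp only [ContinuousMap.add_apply, hf z, hg z, Polynomial.eval_add, Polynomial.eval_mul]
    rw [div_add_div _ _ (hq₁ z) (hq₂ z), mul_comm (Polynomial.eval _ q₁)]
  algebraMap_mem' := by
    intro c
    refine ⟨Polynomial.C c, 1, fun z => by simp, fun z => by simp⟩

noncomputable instance instNACG_A0 (X : Set ℂ) [CompactSpace X] : NormedAddCommGroup ↥(A0 X) := by infer_instance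
noncomputable instance instNS_A0 (X : Set ℂ) [CompactSpace X] : NormedSpace ℂ ↥(A0 X) := by infer_instance
noncomputable instance instNACG_RX (X : Set ℂ) [CompactSpace X] : NormedAddCommGroup ↥(RXalg X) := by infer_instance
noncomputable instance instNS_RX (X : Set ℂ) [CompactSpace X] : NormedSpace ℂ ↥(RXalg X) := by infer_instance
noncomputable instance instNR_RX (X : Set ℂ) [CompactSpace X] : NormedRing ↥(RXalg X) := by infer_instance
instance instCM_RX (X : Set ℂ) [CompactSpace X] : ContinuousMul ↥(RXalg X) :=
  inferInstanceAs (ContinuousMul ↥(RXalg X).toSubsemiring)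

lemma A0_coe (X : Set ℂ) : (A0 X : Set C(X, ℂ)) = R0set X := rfl

lemma RXalg_eq (X : Set ℂ) [CompactSpace X] : RXalg X = (A0 X).topologicalClosure := by
  rw [RXalg, ← A0_coe, Algebra.adjoin_eq]

lemma A0_le_RXalg (X : Set ℂ) [CompactSpace X] : A0 X ≤ RXalg X := by
  rw [RXalg_eq]; exact Subalgebra.le_topologicalClosure _

/-- The inclusion as a continuous linear map. -/
noncomputable def incl (X : Set ℂ) [CompactSpace X] : ↥(A0 X) →L[ℂ] ↥(RXalg X) :=
  LinearMap.mkContinuous (AlgHom.toLinearMap (Subalgebra.inclusion (A0_le_RXalg X))) 1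
    (fun f => by simp only [one_mul]; rfl)

lemma incl_coe (X : Set ℂ) [CompactSpace X] (f : ↥(A0 X)) :
    ((incl X f : ↥(RXalg X)) : C(X, ℂ)) = (f : C(X, ℂ)) := rfl

lemma incl_norm (X : Set ℂ) [CompactSpace X] (f : ↥(A0 X)) : ‖incl X f‖ = ‖f‖ := rfl

lemma incl_isometry (X : Set ℂ) [CompactSpace X] : Isometry (incl X) :=
  AddMonoidHomClass.isometry_of_norm (incl X) (incl_norm X)

lemma incl_denseRange (X : Set ℂ) [CompactSpace X] : DenseRange (incl X) := by
  have h1 : Set.range (incl X) = (Subtype.val : ↥(RXalg X) → C(X,ℂ)) ⁻¹' (A0 X) := by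
    ext f
    constructor
    · rintro ⟨g, rfl⟩; exact g.2
    · intro hf; exact ⟨⟨(f : C(X,ℂ)), hf⟩, rfl⟩
  rw [DenseRange, h1]
  intro f
  rw [closure_subtype]
  have himg : Subtype.val '' ((Subtype.val : ↥(RXalg X) → C(X,ℂ)) ⁻¹' (A0 X)) = (A0 X : Set C(X,ℂ)) := by
    rw [Set.image_preimage_eq_inter_range, Subtype.range_coe]
    exact Set.inter_eq_self_of_subset_left (A0_le_RXalg X)
  rw [himg]
  have h2 : closure ((A0 X : Set C(X,ℂ))) = (RXalg X : Set C(X,ℂ)) := by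
    rw [RXalg_eq]; rfl
  rw [h2]
  exact f.2

lemma incl_mul (X : Set ℂ) [CompactSpace X] (f g : ↥(A0 X)) :
    incl X (f * g) = incl X f * incl X g := rfl

/-! ### Derivatives of rational functions -/

noncomputable def dval (p q : Polynomial ℂ) (z : ℂ) : ℂ :=
  (p.derivative.eval z * q.eval z - p.eval z * q.derivative.eval z) / q.eval z ^ 2

lemma rat_hasDerivAt (p q : Polynomial ℂ) {z : ℂ} (hq : q.eval z ≠ 0) :
    HasDerivAt (fun u => p.eval u / q.eval u) (dval p q z) z :=
  (p.hasDerivAt z).div (q.hasDerivAt z) hq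

lemma eventually_ne (q : Polynomial ℂ) {z : ℂ} (hq : q.eval z ≠ 0) :
    ∀ᶠ u in nhds z, q.eval u ≠ 0 :=
  q.continuous.continuousAt.eventually_ne hq

lemma deriv_rat_add (pa qa pb qb : Polynomial ℂ) {z : ℂ}
    (ha : qa.eval z ≠ 0) (hb : qb.eval z ≠ 0) :
    deriv (fun u => (pa * qb + pb * qa).eval u / ((qa * qb).eval u)) z =
      deriv (fun u => pa.eval u / qa.eval u) z + deriv (fun u => pb.eval u / qb.eval u) z := by
  have h1 := rat_hasDerivAt pa qa ha
  have h2 := rat_hasDerivAt pb qb hb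
  have heq : (fun u => (pa * qb + pb * qa).eval u / ((qa * qb).eval u)) =ᶠ[nhds z]
      fun u => pa.eval u / qa.eval u + pb.eval u / qb.eval u := by
    filter_upwards [eventually_ne qa ha, eventually_ne qb hb] with u hua hub
    simp only [Polynomial.eval_add, Polynomial.eval_mul]
    field_simp <;> ring
  have H := (h1.add h2).congr_of_eventuallyEq heq
  rw [H.deriv, h1.deriv, h2.deriv]

lemma deriv_rat_sub (pa qa pb qb : Polynomial ℂ) {z : ℂ}
    (ha : qa.eval z ≠ 0) (hb : qb.eval z ≠ 0) :
    deriv (fun u => (pa * qb - pb * qa).eval u / ((qa * qb).eval u)) z =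
      deriv (fun u => pa.eval u / qa.eval u) z - deriv (fun u => pb.eval u / qb.eval u) z := by
  have h1 := rat_hasDerivAt pa qa ha
  have h2 := rat_hasDerivAt pb qb hb
  have heq : (fun u => (pa * qb - pb * qa).eval u / ((qa * qb).eval u)) =ᶠ[nhds z]
      fun u => pa.eval u / qa.eval u - pb.eval u / qb.eval u := by
    filter_upwards [eventually_ne qa ha, eventually_ne qb hb] with u hua hub
    simp only [Polynomial.eval_sub, Polynomial.eval_mul]
    field_simp <;> ring
  have H := (h1.sub h2).congr_of_eventuallyEq heq
  rw [H.deriv, h1.deriv, h2.deriv]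

lemma deriv_rat_mul (pa qa pb qb : Polynomial ℂ) {z : ℂ}
    (ha : qa.eval z ≠ 0) (hb : qb.eval z ≠ 0) :
    deriv (fun u => (pa * pb).eval u / ((qa * qb).eval u)) z =
      deriv (fun u => pa.eval u / qa.eval u) z * (pb.eval z / qb.eval z)
        + (pa.eval z / qa.eval z) * deriv (fun u => pb.eval u / qb.eval u) z := by
  have h1 := rat_hasDerivAt pa qa ha
  have h2 := rat_hasDerivAt pb qb hb
  have heq : (fun u => (pa * pb).eval u / ((qa * qb).eval u)) =ᶠ[nhds z]
      fun u => (pa.eval u / qa.eval u) * (pb.eval u / qb.eval u) := by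
    filter_upwards [eventually_ne qa ha, eventually_ne qb hb] with u hua hub
    simp only [Polynomial.eval_mul]
    rw [div_mul_div_comm]
  have H := (h1.mul h2).congr_of_eventuallyEq heq
  rw [H.deriv, h1.deriv, h2.deriv]

/-! ### The integral `Ival` and its properties -/

noncomputable def Ival (ν : Measure ℂ) (w : ℂ → ℂ) (p₁ q₁ p₂ q₂ : Polynomial ℂ) : ℂ :=
  ∫ z, deriv (fun u => p₁.eval u / q₁.eval u) z * (p₂.eval z / q₂.eval z) * w z ∂ν

variable {X : Set ℂ} [CompactSpace X] {ν : Measure ℂ} {w : ℂ → ℂ} {M : ℝ}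

lemma ae_X (hsupp : ν Xᶜ = 0) : ∀ᵐ z ∂ν, z ∈ X := by
  rw [Filter.eventually_iff, mem_ae_iff]
  simpa using hsupp

lemma integrable_core (hsupp : ν Xᶜ = 0) (hw : Integrable w ν) (p₁ q₁ p₂ q₂ : Polynomial ℂ)
    (hq₁ : ∀ z ∈ X, q₁.eval z ≠ 0) (hq₂ : ∀ z ∈ X, q₂.eval z ≠ 0) :
    Integrable (fun z => deriv (fun u => p₁.eval u / q₁.eval u) z
      * (p₂.eval z / q₂.eval z) * w z) ν := by
  have hGmeas : Measurable (fun z => dval p₁ q₁ z * (p₂.eval z / q₂.eval z)) := by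
    apply Measurable.mul
    · exact ((p₁.derivative.continuous.mul q₁.continuous).sub
        (p₁.continuous.mul q₁.derivative.continuous)).measurable.div
        ((q₁.continuous.pow 2).measurable)
    · exact p₂.continuous.measurable.div q₂.continuous.measurable
  have hGcont : ContinuousOn (fun z => dval p₁ q₁ z * (p₂.eval z / q₂.eval z)) X := by
    apply ContinuousOn.mul
    · exact ContinuousOn.div
        (((p₁.derivative.continuous.mul q₁.continuous).sub
          (p₁.continuous.mul q₁.derivative.continuous)).continuousOn)
        ((q₁.continuous.pow 2).continuousOn)
        (fun z hz => pow_ne_zero 2 (hq₁ z hz))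
    · exact ContinuousOn.div p₂.continuous.continuousOn q₂.continuous.continuousOn
        (fun z hz => hq₂ z hz)
  obtain ⟨C, hC⟩ := (isCompact_iff_compactSpace.mpr ‹_›).exists_bound_of_continuousOn hGcont
  have hInt : Integrable (fun z => (dval p₁ q₁ z * (p₂.eval z / q₂.eval z)) * w z) ν := by
    refine Integrable.mono' (hw.norm.const_mul C)
      (hGmeas.aestronglyMeasurable.mul hw.1) ?_
    filter_upwards [ae_X hsupp] with z hz
    rw [norm_mul]
    exact mul_le_mul_of_nonneg_right (hC z hz) (norm_nonneg _)
  refine hInt.congr ?_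
  filter_upwards [ae_X hsupp] with z hz
  rw [(rat_hasDerivAt p₁ q₁ (hq₁ z hz)).deriv]

lemma Ival_congr_right (hsupp : ν Xᶜ = 0) (p₁ q₁ pa qa pb qb : Polynomial ℂ)
    (hab : ∀ z ∈ X, pa.eval z / qa.eval z = pb.eval z / qb.eval z) :
    Ival ν w p₁ q₁ pa qa = Ival ν w p₁ q₁ pb qb := by
  apply integral_congr_ae
  filter_upwards [ae_X hsupp] with z hz
  rw [hab z hz]

lemma Ival_add_left (hsupp : ν Xᶜ = 0) (hw : Integrable w ν) (pa qa pb qb p₂ q₂ : Polynomial ℂ)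
    (hqa : ∀ z ∈ X, qa.eval z ≠ 0) (hqb : ∀ z ∈ X, qb.eval z ≠ 0)
    (hq₂ : ∀ z ∈ X, q₂.eval z ≠ 0) :
    Ival ν w (pa * qb + pb * qa) (qa * qb) p₂ q₂
      = Ival ν w pa qa p₂ q₂ + Ival ν w pb qb p₂ q₂ := by
  have ia := integrable_core hsupp hw pa qa p₂ q₂ hqa hq₂
  have ib := integrable_core hsupp hw pb qb p₂ q₂ hqb hq₂
  rw [Ival, Ival, Ival, ← integral_add ia ib]
  apply integral_congr_ae
  filter_upwards [ae_X hsupp] with z hz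
  rw [deriv_rat_add pa qa pb qb (hqa z hz) (hqb z hz)]
  ring

lemma Ival_sub_left (hsupp : ν Xᶜ = 0) (hw : Integrable w ν) (pa qa pb qb p₂ q₂ : Polynomial ℂ)
    (hqa : ∀ z ∈ X, qa.eval z ≠ 0) (hqb : ∀ z ∈ X, qb.eval z ≠ 0)
    (hq₂ : ∀ z ∈ X, q₂.eval z ≠ 0) :
    Ival ν w (pa * qb - pb * qa) (qa * qb) p₂ q₂
      = Ival ν w pa qa p₂ q₂ - Ival ν w pb qb p₂ q₂ := by
  have ia := integrable_core hsupp hw pa qa p₂ q₂ hqa hq₂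
  have ib := integrable_core hsupp hw pb qb p₂ q₂ hqb hq₂
  rw [Ival, Ival, Ival, ← integral_sub ia ib]
  apply integral_congr_ae
  filter_upwards [ae_X hsupp] with z hz
  rw [deriv_rat_sub pa qa pb qb (hqa z hz) (hqb z hz)]
  ring

lemma Ival_smul_left (c : ℂ) (p₁ q₁ p₂ q₂ : Polynomial ℂ) :
    Ival ν w (c • p₁) q₁ p₂ q₂ = c * Ival ν w p₁ q₁ p₂ q₂ := by
  rw [Ival, Ival, ← smul_eq_mul, ← integral_smul]
  apply integral_congr_ae
  apply Filter.Eventually.of_forall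
  intro z
  have hfun : (fun u => (c • p₁).eval u / q₁.eval u)
      = fun u => c * (p₁.eval u / q₁.eval u) := by
    funext u
    rw [Polynomial.eval_smul, smul_eq_mul, mul_div_assoc]
  show deriv (fun u => (c • p₁).eval u / q₁.eval u) z * (p₂.eval z / q₂.eval z) * w z
      = c • (deriv (fun u => p₁.eval u / q₁.eval u) z * (p₂.eval z / q₂.eval z) * w z)
  rw [hfun, deriv_const_mul_field]
  simp only [smul_eq_mul]
  ring

lemma Ival_add_right (hsupp : ν Xᶜ = 0) (hw : Integrable w ν) (p₁ q₁ pa qa pb qb : Polynomial ℂ)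
    (hq₁ : ∀ z ∈ X, q₁.eval z ≠ 0) (hqa : ∀ z ∈ X, qa.eval z ≠ 0)
    (hqb : ∀ z ∈ X, qb.eval z ≠ 0) :
    Ival ν w p₁ q₁ (pa * qb + pb * qa) (qa * qb)
      = Ival ν w p₁ q₁ pa qa + Ival ν w p₁ q₁ pb qb := by
  have ia := integrable_core hsupp hw p₁ q₁ pa qa hq₁ hqa
  have ib := integrable_core hsupp hw p₁ q₁ pb qb hq₁ hqb
  rw [Ival, Ival, Ival, ← integral_add ia ib]
  apply integral_congr_ae
  filter_upwards [ae_X hsupp] with z hz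
  have : (pa * qb + pb * qa).eval z / (qa * qb).eval z
      = pa.eval z / qa.eval z + pb.eval z / qb.eval z := by
    simp only [Polynomial.eval_add, Polynomial.eval_mul]
    field_simp [hqa z hz, hqb z hz] <;> ring
  rw [this]
  ring

lemma Ival_smul_right (c : ℂ) (p₁ q₁ p₂ q₂ : Polynomial ℂ) :
    Ival ν w p₁ q₁ (c • p₂) q₂ = c * Ival ν w p₁ q₁ p₂ q₂ := by
  rw [Ival, Ival, ← smul_eq_mul, ← integral_smul]
  apply integral_congr_ae
  apply Filter.Eventually.of_forall
  intro z
  show deriv (fun u => p₁.eval u / q₁.eval u) z * ((c • p₂).eval z / q₂.eval z) * w z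
      = c • (deriv (fun u => p₁.eval u / q₁.eval u) z * (p₂.eval z / q₂.eval z) * w z)
  rw [Polynomial.eval_smul]
  simp only [smul_eq_mul]
  ring

lemma Ival_leibniz (hsupp : ν Xᶜ = 0) (hw : Integrable w ν) (p₁ q₁ p₂ q₂ p₃ q₃ : Polynomial ℂ)
    (hq₁ : ∀ z ∈ X, q₁.eval z ≠ 0) (hq₂ : ∀ z ∈ X, q₂.eval z ≠ 0)
    (hq₃ : ∀ z ∈ X, q₃.eval z ≠ 0) :
    Ival ν w (p₁ * p₂) (q₁ * q₂) p₃ q₃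
      = Ival ν w p₁ q₁ (p₂ * p₃) (q₂ * q₃) + Ival ν w p₂ q₂ (p₁ * p₃) (q₁ * q₃) := by
  have ia := integrable_core hsupp hw p₁ q₁ (p₂ * p₃) (q₂ * q₃) hq₁ (fun z hz => by rw [Polynomial.eval_mul]; exact mul_ne_zero (hq₂ z hz) (hq₃ z hz))
  have ib := integrable_core hsupp hw p₂ q₂ (p₁ * p₃) (q₁ * q₃) hq₂ (fun z hz => by rw [Polynomial.eval_mul]; exact mul_ne_zero (hq₁ z hz) (hq₃ z hz))
  rw [Ival, Ival, Ival, ← integral_add ia ib]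
  apply integral_congr_ae
  filter_upwards [ae_X hsupp] with z hz
  rw [deriv_rat_mul p₁ q₁ p₂ q₂ (hq₁ z hz) (hq₂ z hz)]
  simp only [Polynomial.eval_mul]
  rw [← div_mul_div_comm (p₂.eval z), ← div_mul_div_comm (p₁.eval z)]
  ring

lemma sup_abs_eq (f : C(X,ℂ)) (p q : Polynomial ℂ)
    (hf : ∀ z : X, f z = p.eval (z : ℂ) / q.eval (z : ℂ)) :
    (⨆ z : X, ‖p.eval (z : ℂ) / q.eval (z : ℂ)‖) = ‖f‖ := by
  rw [ContinuousMap.norm_eq_iSup_norm]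
  exact iSup_congr fun z => by rw [hf z]

def BddHyp (X : Set ℂ) [CompactSpace X] (ν : Measure ℂ) (w : ℂ → ℂ) (M : ℝ) : Prop :=
  ∀ p₁ q₁ p₂ q₂ : Polynomial ℂ,
      (∀ z ∈ X, q₁.eval z ≠ 0) → (∀ z ∈ X, q₂.eval z ≠ 0) →
      ‖∫ z, deriv (fun u => p₁.eval u / q₁.eval u) z
          * (p₂.eval z / q₂.eval z) * w z ∂ν‖ ≤
        M * (⨆ z : X, ‖p₁.eval (z : ℂ) / q₁.eval (z : ℂ)‖)
          * (⨆ z : X, ‖p₂.eval (z : ℂ) / q₂.eval (z : ℂ)‖)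

lemma Ival_abs_le (hbd : BddHyp X ν w M) (p₁ q₁ p₂ q₂ : Polynomial ℂ)
    (hq₁ : ∀ z ∈ X, q₁.eval z ≠ 0) (hq₂ : ∀ z ∈ X, q₂.eval z ≠ 0)
    (f g : C(X,ℂ)) (hf : ∀ z : X, f z = p₁.eval (z : ℂ) / q₁.eval (z : ℂ))
    (hg : ∀ z : X, g z = p₂.eval (z : ℂ) / q₂.eval (z : ℂ)) :
    ‖Ival ν w p₁ q₁ p₂ q₂‖ ≤ M * ‖f‖ * ‖g‖ := by
  have h := hbd p₁ q₁ p₂ q₂ hq₁ hq₂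
  rwa [sup_abs_eq f p₁ q₁ hf, sup_abs_eq g p₂ q₂ hg] at h

lemma Ival_congr_left (hbd : BddHyp X ν w M) (hsupp : ν Xᶜ = 0) (hw : Integrable w ν)
    (pa qa pb qb p₂ q₂ : Polynomial ℂ)
    (hqa : ∀ z ∈ X, qa.eval z ≠ 0) (hqb : ∀ z ∈ X, qb.eval z ≠ 0)
    (hq₂ : ∀ z ∈ X, q₂.eval z ≠ 0)
    (hab : ∀ z ∈ X, pa.eval z / qa.eval z = pb.eval z / qb.eval z) :
    Ival ν w pa qa p₂ q₂ = Ival ν w pb qb p₂ q₂ := by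
  have hQ : ∀ z ∈ X, (qa * qb).eval z ≠ 0 := fun z hz => by
    rw [Polynomial.eval_mul]; exact mul_ne_zero (hqa z hz) (hqb z hz)
  have hzero : ∀ z : X, (pa * qb - pb * qa).eval (z : ℂ) / (qa * qb).eval (z : ℂ) = 0 := by
    intro z
    have h0 := sub_eq_zero.mpr (hab z z.2)
    rw [div_sub_div _ _ (hqa z z.2) (hqb z z.2)] at h0
    rw [show (pa * qb - pb * qa).eval (z : ℂ)
        = pa.eval (z : ℂ) * qb.eval (z : ℂ) - qa.eval (z : ℂ) * pb.eval (z : ℂ) by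
      simp [Polynomial.eval_mul]; ring, Polynomial.eval_mul]
    exact h0
  have hsub := Ival_sub_left hsupp hw pa qa pb qb p₂ q₂ hqa hqb hq₂
  have hb : ‖Ival ν w (pa * qb - pb * qa) (qa * qb) p₂ q₂‖ ≤
      M * (⨆ z : X, ‖(pa * qb - pb * qa).eval (z : ℂ) / (qa * qb).eval (z : ℂ)‖)
        * (⨆ z : X, ‖p₂.eval (z : ℂ) / q₂.eval (z : ℂ)‖) :=
    hbd _ _ _ _ hQ hq₂
  have hsupz : (⨆ z : X, ‖(pa * qb - pb * qa).eval (z : ℂ)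
      / (qa * qb).eval (z : ℂ)‖) = 0 := by
    rcases isEmpty_or_nonempty X with h | h
    · exact Real.iSup_of_isEmpty _
    · have : (fun z : X => ‖(pa * qb - pb * qa).eval (z : ℂ)
          / (qa * qb).eval (z : ℂ)‖) = fun _ : X => (0:ℝ) := by
        funext z; rw [hzero z]; simp
      rw [this]
      exact ciSup_const
  rw [hsupz, mul_zero, zero_mul] at hb
  have h0 : Ival ν w (pa * qb - pb * qa) (qa * qb) p₂ q₂ = 0 := by
    have := norm_nonneg (Ival ν w (pa * qb - pb * qa) (qa * qb) p₂ q₂)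
    exact norm_eq_zero.mp (le_antisymm hb this)
  rw [hsub] at h0
  exact sub_eq_zero.mp h0


/-! ### The bilinear form on `A0` via chosen representatives -/

lemma mem_R0 {X : Set ℂ} (f : ↥(A0 X)) : (f : C(X,ℂ)) ∈ R0set X := f.2

noncomputable def pR {X : Set ℂ} (f : ↥(A0 X)) : Polynomial ℂ := (mem_R0 f).choose

noncomputable def qR {X : Set ℂ} (f : ↥(A0 X)) : Polynomial ℂ := (mem_R0 f).choose_spec.choose

lemma qR_ne {X : Set ℂ} (f : ↥(A0 X)) : ∀ z ∈ X, (qR f).eval z ≠ 0 :=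
  fun z hz => (mem_R0 f).choose_spec.choose_spec.1 ⟨z, hz⟩

lemma fR {X : Set ℂ} (f : ↥(A0 X)) :
    ∀ z : X, (f : C(X,ℂ)) z = (pR f).eval (z : ℂ) / (qR f).eval (z : ℂ) :=
  (mem_R0 f).choose_spec.choose_spec.2

noncomputable def bval (ν : Measure ℂ) (w : ℂ → ℂ) {X : Set ℂ} (f g : ↥(A0 X)) : ℂ :=
  Ival ν w (pR f) (qR f) (pR g) (qR g)

variable {X : Set ℂ} [CompactSpace X] {ν : Measure ℂ} {w : ℂ → ℂ} {M : ℝ}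

lemma bval_eq (hbd : BddHyp X ν w M) (hsupp : ν Xᶜ = 0) (hw : Integrable w ν)
    (f g : ↥(A0 X)) (pa qa pb qb : Polynomial ℂ)
    (hqa : ∀ z ∈ X, qa.eval z ≠ 0) (hqb : ∀ z ∈ X, qb.eval z ≠ 0)
    (hfa : ∀ z : X, (f : C(X,ℂ)) z = pa.eval (z : ℂ) / qa.eval (z : ℂ))
    (hgb : ∀ z : X, (g : C(X,ℂ)) z = pb.eval (z : ℂ) / qb.eval (z : ℂ)) :
    bval ν w f g = Ival ν w pa qa pb qb := by
  have h1 : ∀ z ∈ X, (pR f).eval z / (qR f).eval z = pa.eval z / qa.eval z := fun z hz => by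
    rw [← fR f ⟨z, hz⟩, hfa ⟨z, hz⟩]
  have h2 : ∀ z ∈ X, (pR g).eval z / (qR g).eval z = pb.eval z / qb.eval z := fun z hz => by
    rw [← fR g ⟨z, hz⟩, hgb ⟨z, hz⟩]
  rw [bval, Ival_congr_left hbd hsupp hw (pR f) (qR f) pa qa (pR g) (qR g)
    (qR_ne f) hqa (qR_ne g) h1,
    Ival_congr_right hsupp pa qa (pR g) (qR g) pb qb h2]

lemma qR_mul_ne (f g : ↥(A0 X)) : ∀ z ∈ X, ((qR f) * (qR g)).eval z ≠ 0 := fun z hz => by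
  rw [Polynomial.eval_mul]; exact mul_ne_zero (qR_ne f z hz) (qR_ne g z hz)

lemma val_add (f g : ↥(A0 X)) : ∀ z : X, ((f + g : ↥(A0 X)) : C(X,ℂ)) z
    = ((pR f) * (qR g) + (pR g) * (qR f)).eval (z : ℂ) / ((qR f) * (qR g)).eval (z : ℂ) := by
  intro z
  have hd := div_add_div ((pR f).eval (z:ℂ)) ((pR g).eval (z:ℂ))
    (qR_ne f (z:ℂ) z.2) (qR_ne g (z:ℂ) z.2)
  have : ((f + g : ↥(A0 X)) : C(X,ℂ)) z = (f : C(X,ℂ)) z + (g : C(X,ℂ)) z := rfl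
  rw [this, fR f z, fR g z, hd]
  simp only [Polynomial.eval_add, Polynomial.eval_mul]
  rw [mul_comm ((qR f).eval (z:ℂ)) ((pR g).eval (z:ℂ))]

lemma val_smul (c : ℂ) (f : ↥(A0 X)) : ∀ z : X, ((c • f : ↥(A0 X)) : C(X,ℂ)) z
    = (c • pR f).eval (z : ℂ) / (qR f).eval (z : ℂ) := by
  intro z
  have : ((c • f : ↥(A0 X)) : C(X,ℂ)) z = c * (f : C(X,ℂ)) z := rfl
  rw [this, fR f z, Polynomial.eval_smul, smul_eq_mul, mul_div_assoc]

lemma val_mul (f g : ↥(A0 X)) : ∀ z : X, ((f * g : ↥(A0 X)) : C(X,ℂ)) z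
    = ((pR f) * (pR g)).eval (z : ℂ) / ((qR f) * (qR g)).eval (z : ℂ) := by
  intro z
  have : ((f * g : ↥(A0 X)) : C(X,ℂ)) z = (f : C(X,ℂ)) z * (g : C(X,ℂ)) z := rfl
  rw [this, fR f z, fR g z, div_mul_div_comm]
  simp only [Polynomial.eval_mul]

lemma bval_add_left (hbd : BddHyp X ν w M) (hsupp : ν Xᶜ = 0) (hw : Integrable w ν)
    (f g h : ↥(A0 X)) : bval ν w (f + g) h = bval ν w f h + bval ν w g h := by
  rw [bval_eq hbd hsupp hw (f + g) h ((pR f) * (qR g) + (pR g) * (qR f)) ((qR f) * (qR g))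
      (pR h) (qR h) (qR_mul_ne f g) (qR_ne h) (val_add f g) (fR h),
    Ival_add_left hsupp hw (pR f) (qR f) (pR g) (qR g) (pR h) (qR h)
      (qR_ne f) (qR_ne g) (qR_ne h)]
  rfl

lemma bval_smul_left (hbd : BddHyp X ν w M) (hsupp : ν Xᶜ = 0) (hw : Integrable w ν)
    (c : ℂ) (f g : ↥(A0 X)) : bval ν w (c • f) g = c * bval ν w f g := by
  rw [bval_eq hbd hsupp hw (c • f) g (c • pR f) (qR f) (pR g) (qR g)
      (qR_ne f) (qR_ne g) (val_smul c f) (fR g),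
    Ival_smul_left c (pR f) (qR f) (pR g) (qR g)]
  rfl

lemma bval_add_right (hbd : BddHyp X ν w M) (hsupp : ν Xᶜ = 0) (hw : Integrable w ν)
    (f g h : ↥(A0 X)) : bval ν w f (g + h) = bval ν w f g + bval ν w f h := by
  rw [bval_eq hbd hsupp hw f (g + h) (pR f) (qR f)
      ((pR g) * (qR h) + (pR h) * (qR g)) ((qR g) * (qR h))
      (qR_ne f) (qR_mul_ne g h) (fR f) (val_add g h),
    Ival_add_right hsupp hw (pR f) (qR f) (pR g) (qR g) (pR h) (qR h)
      (qR_ne f) (qR_ne g) (qR_ne h)]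
  rfl

lemma bval_smul_right (hbd : BddHyp X ν w M) (hsupp : ν Xᶜ = 0) (hw : Integrable w ν)
    (c : ℂ) (f g : ↥(A0 X)) : bval ν w f (c • g) = c * bval ν w f g := by
  rw [bval_eq hbd hsupp hw f (c • g) (pR f) (qR f) (c • pR g) (qR g)
      (qR_ne f) (qR_ne g) (fR f) (val_smul c g),
    Ival_smul_right c (pR f) (qR f) (pR g) (qR g)]
  rfl

lemma bval_leibniz (hbd : BddHyp X ν w M) (hsupp : ν Xᶜ = 0) (hw : Integrable w ν)
    (f g h : ↥(A0 X)) :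
    bval ν w (f * g) h = bval ν w f (g * h) + bval ν w g (f * h) := by
  rw [bval_eq hbd hsupp hw (f * g) h ((pR f) * (pR g)) ((qR f) * (qR g)) (pR h) (qR h)
      (qR_mul_ne f g) (qR_ne h) (val_mul f g) (fR h),
    Ival_leibniz hsupp hw (pR f) (qR f) (pR g) (qR g) (pR h) (qR h)
      (qR_ne f) (qR_ne g) (qR_ne h),
    ← bval_eq hbd hsupp hw f (g * h) (pR f) (qR f) ((pR g) * (pR h)) ((qR g) * (qR h))
      (qR_ne f) (qR_mul_ne g h) (fR f) (val_mul g h),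
    ← bval_eq hbd hsupp hw g (f * h) (pR g) (qR g) ((pR f) * (pR h)) ((qR f) * (qR h))
      (qR_ne g) (qR_mul_ne f h) (fR g) (val_mul f h)]

lemma bval_bound (hbd : BddHyp X ν w M) (f g : ↥(A0 X)) :
    ‖bval ν w f g‖ ≤ M * ‖f‖ * ‖g‖ :=
  Ival_abs_le hbd (pR f) (qR f) (pR g) (qR g) (qR_ne f) (qR_ne g)
    (f : C(X,ℂ)) (g : C(X,ℂ)) (fR f) (fR g)


/-! ### Extension to the closure -/

noncomputable def binner (hbd : BddHyp X ν w M) (hsupp : ν Xᶜ = 0) (hw : Integrable w ν)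
    (hM : 0 < M) (f : ↥(A0 X)) : ↥(A0 X) →L[ℂ] ℂ :=
  LinearMap.mkContinuous
    { toFun := fun g => bval ν w f g
      map_add' := fun g₁ g₂ => bval_add_right hbd hsupp hw f g₁ g₂
      map_smul' := fun c g => by simpa using bval_smul_right hbd hsupp hw c f g }
    (M * ‖f‖) (fun g => by
      exact bval_bound hbd f g)

lemma binner_apply (hbd : BddHyp X ν w M) (hsupp : ν Xᶜ = 0) (hw : Integrable w ν)
    (hM : 0 < M) (f g : ↥(A0 X)) :
    binner hbd hsupp hw hM f g = bval ν w f g := rfl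

lemma binner_norm (hbd : BddHyp X ν w M) (hsupp : ν Xᶜ = 0) (hw : Integrable w ν)
    (hM : 0 < M) (f : ↥(A0 X)) : ‖binner hbd hsupp hw hM f‖ ≤ M * ‖f‖ :=
  LinearMap.mkContinuous_norm_le _ (mul_nonneg hM.le (norm_nonneg f)) _

noncomputable def Dhalf (hbd : BddHyp X ν w M) (hsupp : ν Xᶜ = 0) (hw : Integrable w ν)
    (hM : 0 < M) (f : ↥(A0 X)) : ↥(RXalg X) →L[ℂ] ℂ :=
  (binner hbd hsupp hw hM f).extend (incl X)

lemma Dhalf_incl (hbd : BddHyp X ν w M) (hsupp : ν Xᶜ = 0) (hw : Integrable w ν)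
    (hM : 0 < M) (f g : ↥(A0 X)) :
    Dhalf hbd hsupp hw hM f (incl X g) = bval ν w f g :=
  ContinuousLinearMap.extend_eq _ (incl_denseRange X) (incl_isometry X).isUniformInducing g

lemma Dhalf_norm (hbd : BddHyp X ν w M) (hsupp : ν Xᶜ = 0) (hw : Integrable w ν)
    (hM : 0 < M) (f : ↥(A0 X)) : ‖Dhalf hbd hsupp hw hM f‖ ≤ M * ‖f‖ := by
  have h1 := ContinuousLinearMap.opNorm_extend_le (binner hbd hsupp hw hM f)
    (incl_denseRange X) (N := 1) (fun x => le_of_eq (by rw [incl_norm, NNReal.coe_one, one_mul]))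
  calc ‖Dhalf hbd hsupp hw hM f‖ ≤ (1 : NNReal) * ‖binner hbd hsupp hw hM f‖ := h1
    _ ≤ M * ‖f‖ := by
        rw [NNReal.coe_one, one_mul]
        exact binner_norm hbd hsupp hw hM f

lemma Dhalf_add (hbd : BddHyp X ν w M) (hsupp : ν Xᶜ = 0) (hw : Integrable w ν)
    (hM : 0 < M) (f₁ f₂ : ↥(A0 X)) :
    Dhalf hbd hsupp hw hM (f₁ + f₂) = Dhalf hbd hsupp hw hM f₁ + Dhalf hbd hsupp hw hM f₂ := by
  apply ContinuousLinearMap.coeFn_injective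
  refine DenseRange.equalizer (incl_denseRange X) (Dhalf hbd hsupp hw hM (f₁ + f₂)).continuous
    (Dhalf hbd hsupp hw hM f₁ + Dhalf hbd hsupp hw hM f₂).continuous (funext fun g => ?_)
  simp only [Function.comp_apply, ContinuousLinearMap.add_apply, Dhalf_incl]
  exact bval_add_left hbd hsupp hw f₁ f₂ g

lemma Dhalf_smul (hbd : BddHyp X ν w M) (hsupp : ν Xᶜ = 0) (hw : Integrable w ν)
    (hM : 0 < M) (c : ℂ) (f : ↥(A0 X)) :
    Dhalf hbd hsupp hw hM (c • f) = c • Dhalf hbd hsupp hw hM f := by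
  apply ContinuousLinearMap.coeFn_injective
  refine DenseRange.equalizer (incl_denseRange X) (Dhalf hbd hsupp hw hM (c • f)).continuous
    (c • Dhalf hbd hsupp hw hM f).continuous (funext fun g => ?_)
  simp only [Function.comp_apply, ContinuousLinearMap.smul_apply, Dhalf_incl]
  simpa using bval_smul_left hbd hsupp hw c f g

noncomputable def Dfull (hbd : BddHyp X ν w M) (hsupp : ν Xᶜ = 0) (hw : Integrable w ν)
    (hM : 0 < M) : ↥(RXalg X) →L[ℂ] ↥(RXalg X) →L[ℂ] ℂ :=
  (LinearMap.mkContinuous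
    { toFun := Dhalf hbd hsupp hw hM
      map_add' := Dhalf_add hbd hsupp hw hM
      map_smul' := fun c f => by simpa using Dhalf_smul hbd hsupp hw hM c f }
    M (fun f => Dhalf_norm hbd hsupp hw hM f)).extend (incl X)

lemma Dfull_incl (hbd : BddHyp X ν w M) (hsupp : ν Xᶜ = 0) (hw : Integrable w ν)
    (hM : 0 < M) (f : ↥(A0 X)) :
    Dfull hbd hsupp hw hM (incl X f) = Dhalf hbd hsupp hw hM f :=
  ContinuousLinearMap.extend_eq _ (incl_denseRange X) (incl_isometry X).isUniformInducing f

lemma Dfull_incl_incl (hbd : BddHyp X ν w M) (hsupp : ν Xᶜ = 0) (hw : Integrable w ν)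
    (hM : 0 < M) (f g : ↥(A0 X)) :
    Dfull hbd hsupp hw hM (incl X f) (incl X g) = bval ν w f g := by
  rw [Dfull_incl, Dhalf_incl]

lemma Dfull_leibniz (hbd : BddHyp X ν w M) (hsupp : ν Xᶜ = 0) (hw : Integrable w ν)
    (hM : 0 < M) (f g h : ↥(RXalg X)) :
    Dfull hbd hsupp hw hM (f * g) h
      = Dfull hbd hsupp hw hM f (g * h) + Dfull hbd hsupp hw hM g (f * h) := by
  set D := Dfull hbd hsupp hw hM with hD
  have ev : ∀ (u : ↥(RXalg X)), Continuous fun T : ↥(RXalg X) →L[ℂ] ℂ => T u :=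
    fun u => (ContinuousLinearMap.apply ℂ ℂ u).continuous
  -- Step 1: all three in the range of incl
  have key0 : ∀ f₀ g₀ h₀ : ↥(A0 X),
      D (incl X f₀ * incl X g₀) (incl X h₀)
        = D (incl X f₀) (incl X g₀ * incl X h₀) + D (incl X g₀) (incl X f₀ * incl X h₀) := by
    intro f₀ g₀ h₀
    rw [← incl_mul, ← incl_mul, ← incl_mul, Dfull_incl_incl, Dfull_incl_incl, Dfull_incl_incl]
    exact bval_leibniz hbd hsupp hw f₀ g₀ h₀
  -- Step 2: extend in the first variable
  have key1 : ∀ (g₀ h₀ : ↥(A0 X)) (f : ↥(RXalg X)),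
      D (f * incl X g₀) (incl X h₀)
        = D f (incl X g₀ * incl X h₀) + D (incl X g₀) (f * incl X h₀) := by
    intro g₀ h₀
    have hc1 : Continuous fun f : ↥(RXalg X) => D (f * incl X g₀) (incl X h₀) :=
      (ev _).comp (D.continuous.comp (continuous_mul_right _))
    have hc2 : Continuous fun f : ↥(RXalg X) =>
        D f (incl X g₀ * incl X h₀) + D (incl X g₀) (f * incl X h₀) :=
      ((ev _).comp D.continuous).add
        ((D (incl X g₀)).continuous.comp (continuous_mul_right _))
    exact fun f => congrFun (DenseRange.equalizer (incl_denseRange X) hc1 hc2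
      (funext fun f₀ => key0 f₀ g₀ h₀)) f
  -- Step 3: extend in the second variable
  have key2 : ∀ (h₀ : ↥(A0 X)) (f g : ↥(RXalg X)),
      D (f * g) (incl X h₀) = D f (g * incl X h₀) + D g (f * incl X h₀) := by
    intro h₀ f g
    have hc1 : Continuous fun g : ↥(RXalg X) => D (f * g) (incl X h₀) :=
      (ev _).comp (D.continuous.comp (continuous_mul_left f))
    have hc2 : Continuous fun g : ↥(RXalg X) =>
        D f (g * incl X h₀) + D g (f * incl X h₀) :=
      ((D f).continuous.comp (continuous_mul_right _)).add
        ((ev _).comp D.continuous)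
    exact congrFun (DenseRange.equalizer (incl_denseRange X) hc1 hc2
      (funext fun g₀ => key1 g₀ h₀ f)) g
  -- Step 4: extend in the third variable
  have hc1 : Continuous fun h : ↥(RXalg X) => D (f * g) h := (D (f * g)).continuous
  have hc2 : Continuous fun h : ↥(RXalg X) => D f (g * h) + D g (f * h) :=
    ((D f).continuous.comp (continuous_mul_left g)).add
      ((D g).continuous.comp (continuous_mul_left f))
  exact congrFun (DenseRange.equalizer (incl_denseRange X) hc1 hc2
    (funext fun h₀ => key2 h₀ f g)) h

lemma supCM_eq {X : Set ℂ} [CompactSpace X] (f : C(X,ℂ)) : supCM f = ‖f‖ := by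
  rw [supCM, ContinuousMap.norm_eq_iSup_norm]

end St16

/-- Let `X` be a compact plane set and let `μ` be a complex regular Borel
measure on `X` (encoded, via polar decomposition, as `μ = w dν` with `ν` a finite regular
Borel measure vanishing off `X` and `w` a `ν`-integrable density) such that the bilinear
functional `(f, g) ↦ ∫_X f′ g dμ` on `R₀(X) × R₀(X)` is bounded by `M`.  Then there is a
continuous linear map `D` from `R(X)` to its dual `R(X)′` — encoded as a bounded bilinear
map `D : R(X) →ₗ R(X) →ₗ ℂ` — such that `D f g = ∫_X f′ g dμ` for all `f, g ∈ R₀(X)` and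
`D` is a derivation into the dual module: `D (f*g) h = D f (g*h) + D g (f*h)`. -/
theorem statement16 (X : Set ℂ) [CompactSpace X]
    (ν : Measure ℂ) (hfin : IsFiniteMeasure ν) (hregular : ν.Regular) (hsupp : ν Xᶜ = 0)
    (w : ℂ → ℂ) (hw : Integrable w ν) (M : ℝ) (hM : 0 < M)
    (hbd : ∀ p₁ q₁ p₂ q₂ : Polynomial ℂ,
      (∀ z ∈ X, q₁.eval z ≠ 0) → (∀ z ∈ X, q₂.eval z ≠ 0) →
      ‖∫ z, deriv (fun u => p₁.eval u / q₁.eval u) z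
          * (p₂.eval z / q₂.eval z) * w z ∂ν‖ ≤
        M * (⨆ z : X, ‖p₁.eval (z : ℂ) / q₁.eval (z : ℂ)‖)
          * (⨆ z : X, ‖p₂.eval (z : ℂ) / q₂.eval (z : ℂ)‖)) :
    ∃ D : ↥(RXalg X) →ₗ[ℂ] ↥(RXalg X) →ₗ[ℂ] ℂ,
      (∃ M' : ℝ, ∀ f g : ↥(RXalg X), ‖D f g‖ ≤
        M' * supCM (f : C(X, ℂ)) * supCM (g : C(X, ℂ))) ∧
      (∀ f g h : ↥(RXalg X), D (f * g) h = D f (g * h) + D g (f * h)) ∧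
      (∀ p₁ q₁ p₂ q₂ : Polynomial ℂ,
        (∀ z ∈ X, q₁.eval z ≠ 0) → (∀ z ∈ X, q₂.eval z ≠ 0) →
        ∀ f g : ↥(RXalg X),
          (∀ z : X, (f : C(X, ℂ)) z = p₁.eval (z : ℂ) / q₁.eval (z : ℂ)) →
          (∀ z : X, (g : C(X, ℂ)) z = p₂.eval (z : ℂ) / q₂.eval (z : ℂ)) →
          D f g = ∫ z, deriv (fun u => p₁.eval u / q₁.eval u) z
            * (p₂.eval z / q₂.eval z) * w z ∂ν) := by
  classical
  have hbd' : St16.BddHyp X ν w M := hbd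
  set D := St16.Dfull hbd' hsupp hw hM with hDdef
  refine ⟨(ContinuousLinearMap.coeLM ℂ).comp D.toLinearMap, ⟨‖D‖, fun f g => ?_⟩, ?_, ?_⟩
  · have h1 : ‖D f g‖ ≤ ‖D‖ * ‖f‖ * ‖g‖ := by
      calc ‖(D f) g‖ ≤ ‖D f‖ * ‖g‖ := (D f).le_opNorm g
        _ ≤ ‖D‖ * ‖f‖ * ‖g‖ :=
            mul_le_mul_of_nonneg_right (D.le_opNorm f) (norm_nonneg g)
    rw [St16.supCM_eq, St16.supCM_eq]; exact h1
  · intro f g h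
    exact St16.Dfull_leibniz hbd' hsupp hw hM f g h
  · intro p₁ q₁ p₂ q₂ hq₁ hq₂ f g hf hg
    have hf0 : (f : C(X,ℂ)) ∈ R0set X := ⟨p₁, q₁, fun z => hq₁ _ z.2, hf⟩
    have hg0 : (g : C(X,ℂ)) ∈ R0set X := ⟨p₂, q₂, fun z => hq₂ _ z.2, hg⟩
    have hfi : f = St16.incl X ⟨(f : C(X,ℂ)), hf0⟩ := Subtype.ext rfl
    have hgi : g = St16.incl X ⟨(g : C(X,ℂ)), hg0⟩ := Subtype.ext rfl
    show D f g = _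
    rw [hfi, hgi, St16.Dfull_incl_incl hbd' hsupp hw hM,
      St16.bval_eq hbd' hsupp hw _ _ p₁ q₁ p₂ q₂ hq₁ hq₂ hf hg]
    rfl
end
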